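/- arXiv:1809.03685 — 2 statements merged into one kernel-verified Lean document; each statement's English description precedes it below -/
import Mathlib

section
/- In a rooted binary tree T on n vertices with S a set of marked vertices with |S| = 4, there exists an edge whose removal splits T into two parts such that, counting for each part the endpoint of the removed edge in that part as an additional marked vertex, each part has at most 3 marked vertices. -/
/-- In a rooted binary tree `T` on `n` vertices with a set `S` of marked vertices
with `|S| ≤ 4`, provided `|S| = 4`, there exists an edge `(v, u)` (`u` a child of
`v`) whose removal splits `T` into the subtree rooted at `u` and the remainder, such
that each part contains at most `3` marked vertices, where for each part the
endpoint of the removed edge lying in that part is counted as an additional marked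
vertex. -/
theorem border_split_four_marked {V : Type*} [Fintype V]
    (parent : V → Option V) (root : V)
    (hroot : ∀ v : V, parent v = none ↔ v = root)
    (hacyc : WellFounded fun u v : V => parent v = some u)
    (hbinary : ∀ v : V, {u : V | parent u = some v}.ncard ≤ 2)
    (S : Set V) (hS4 : S.ncard ≤ 4) (hS : S.ncard = 4) :
    ∃ u v : V, parent u = some v ∧
      (let desc := {w : V | Relation.ReflTransGen (fun a b : V => parent a = some b) w u};
       ((S ∩ desc) ∪ {u}).ncard ≤ 3 ∧
       ((S \ desc) ∪ {v}).ncard ≤ 3) := by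
  classical
  set step : V → V → Prop := fun a b => parent a = some b with hstep
  set desc : V → Set V := fun w => {x | Relation.ReflTransGen step x w} with hdesc
  -- every vertex is a descendant of the root
  have hall : ∀ x : V, x ∈ desc root := by
    intro x
    induction x using hacyc.induction with
    | _ x ih =>
      by_cases hx : x = root
      · subst hx; exact Relation.ReflTransGen.refl
      · have hpx : parent x ≠ none := fun h => hx ((hroot x).1 h)
        obtain ⟨p, hp⟩ := Option.ne_none_iff_exists'.1 hpx
        exact Relation.ReflTransGen.head hp (ih p hp)
  -- TransGen step is irreflexive
  have hirr : ∀ x : V, ¬ Relation.TransGen step x x := by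
    intro x hx
    have h2 : Relation.TransGen (fun u v : V => parent v = some u) x x :=
      Relation.transGen_swap.mpr hx
    exact (hacyc.transGen).isIrrefl.irrefl x h2
  haveI : IsTrans V (fun x w : V => Relation.TransGen step x w) :=
    ⟨fun a b c hab hbc => hab.trans hbc⟩
  haveI : IsIrrefl V (fun x w : V => Relation.TransGen step x w) := ⟨hirr⟩
  have hwfd : WellFounded (fun x w : V => Relation.TransGen step x w) :=
    Finite.wellFounded_of_trans_of_irrefl _
  have hrootA : 2 ≤ (S ∩ desc root).ncard := by
    have : S ∩ desc root = S := Set.inter_eq_left.mpr fun x _ => hall x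
    rw [this, hS]; omega
  obtain ⟨w, hwA, hwmin⟩ := hwfd.has_min {w : V | 2 ≤ (S ∩ desc w).ncard} ⟨root, hrootA⟩
  -- each child subtree contains at most one marked vertex
  have hchild : ∀ c : V, step c w → (S ∩ desc c).ncard ≤ 1 := by
    intro c hc
    by_contra h
    exact hwmin c (by simp only [Set.mem_setOf_eq]; omega) (Relation.TransGen.single hc)
  -- S ∩ desc w minus w is covered by child subtrees
  have hcover : ∀ x ∈ (S ∩ desc w) \ {w}, ∃ c, step c w ∧ x ∈ S ∩ desc c := by
    rintro x ⟨⟨hxS, hxd⟩, hxw⟩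
    rcases Relation.ReflTransGen.cases_tail hxd with h | ⟨c, hxc, hcw⟩
    · exact absurd h.symm hxw
    · exact ⟨c, hcw, hxS, hxc⟩
  -- at most two marked vertices besides w
  have hbound : ((S ∩ desc w) \ {w}).ncard ≤ 2 := by
    have hC := hbinary w
    have hCfin : {u : V | parent u = some w}.Finite := Set.toFinite _
    interval_cases h : ({u : V | parent u = some w}).ncard
    · -- 0 children
      rw [Set.ncard_eq_zero hCfin] at h
      have : (S ∩ desc w) \ {w} = ∅ := by
        ext x
        simp only [Set.mem_empty_iff_false, iff_false]
        intro hx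
        obtain ⟨c, hc, -⟩ := hcover x hx
        exact (Set.eq_empty_iff_forall_notMem.mp h c) hc
      simp [this]
    · obtain ⟨c, hc⟩ := Set.ncard_eq_one.mp h
      have hsub : (S ∩ desc w) \ {w} ⊆ S ∩ desc c := by
        intro x hx
        obtain ⟨c', hc', hx'⟩ := hcover x hx
        have : c' ∈ ({c} : Set V) := hc ▸ hc'
        rwa [Set.mem_singleton_iff.mp this] at hx'
      calc ((S ∩ desc w) \ {w}).ncard ≤ (S ∩ desc c).ncard :=
            Set.ncard_le_ncard hsub (Set.toFinite _)
        _ ≤ 1 := hchild c (show c ∈ {u : V | parent u = some w} by rw [hc]; exact rfl)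
        _ ≤ 2 := by omega
    · obtain ⟨c1, c2, hne, hc⟩ := Set.ncard_eq_two.mp h
      have hsub : (S ∩ desc w) \ {w} ⊆ (S ∩ desc c1) ∪ (S ∩ desc c2) := by
        intro x hx
        obtain ⟨c', hc', hx'⟩ := hcover x hx
        have : c' ∈ ({c1, c2} : Set V) := hc ▸ hc'
        rcases this with h1 | h2
        · exact Or.inl (h1 ▸ hx')
        · exact Or.inr (h2 ▸ hx')
      have h1 : c1 ∈ {u : V | parent u = some w} := by rw [hc]; exact Or.inl rfl
      have h2 : c2 ∈ {u : V | parent u = some w} := by rw [hc]; exact Or.inr rfl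
      calc ((S ∩ desc w) \ {w}).ncard ≤ ((S ∩ desc c1) ∪ (S ∩ desc c2)).ncard :=
            Set.ncard_le_ncard hsub (Set.toFinite _)
        _ ≤ (S ∩ desc c1).ncard + (S ∩ desc c2).ncard := Set.ncard_union_le _ _
        _ ≤ 2 := by have := hchild c1 h1; have := hchild c2 h2; omega
  -- subtree of w has at most 3 marked vertices
  have hw3 : (S ∩ desc w).ncard ≤ 3 := by
    have : S ∩ desc w ⊆ insert w ((S ∩ desc w) \ {w}) := by
      intro x hx
      by_cases hxw : x = w
      · exact Or.inl hxw
      · exact Or.inr ⟨hx, hxw⟩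
    calc (S ∩ desc w).ncard ≤ (insert w ((S ∩ desc w) \ {w})).ncard :=
          Set.ncard_le_ncard this (Set.toFinite _)
      _ ≤ ((S ∩ desc w) \ {w}).ncard + 1 := Set.ncard_insert_le _ _
      _ ≤ 3 := by omega
  -- w is not the root
  have hwroot : w ≠ root := by
    intro h
    have : S ∩ desc root = S := Set.inter_eq_left.mpr fun x _ => hall x
    rw [h, this, hS] at hw3
    omega
  have hpw : parent w ≠ none := fun h => hwroot ((hroot w).1 h)
  obtain ⟨v, hv⟩ := Option.ne_none_iff_exists'.1 hpw
  refine ⟨w, v, hv, ?_, ?_⟩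
  · -- first part
    have heq : (S ∩ desc w) ∪ {w} = insert w ((S ∩ desc w) \ {w}) := by
      ext x
      by_cases hxw : x = w <;> simp [hxw]
    calc ((S ∩ desc w) ∪ {w}).ncard = (insert w ((S ∩ desc w) \ {w})).ncard := by rw [heq]
      _ ≤ ((S ∩ desc w) \ {w}).ncard + 1 := Set.ncard_insert_le _ _
      _ ≤ 3 := by omega
  · -- second part
    have hsplit : (S ∩ desc w).ncard + (S \ desc w).ncard = S.ncard :=
      Set.ncard_inter_add_ncard_diff_eq_ncard S (desc w) (Set.toFinite S)
    have hdiff : (S \ desc w).ncard ≤ 2 := by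
      have := hwA
      simp only [Set.mem_setOf_eq] at this
      omega
    calc ((S \ desc w) ∪ {v}).ncard ≤ (S \ desc w).ncard + ({v} : Set V).ncard :=
          Set.ncard_union_le _ _
      _ ≤ 3 := by rw [Set.ncard_singleton]; omega
end

section
/- Consider a rooted component tree T_i that is binary (every node has at most 2 children), and a merging step in which: every node with exactly two children is selected, the root is selected, and each unselected node is merged into its closest selected ancestor. Then the resulting contracted tree T_{i+1} is also binary. -/
/-!
Let `U = {v | g v = d}` be the merged group of a selected node `d`. Every `u ∈ U` other than
`d` is unselected, hence not the root, and its parent also lies in `U`; so the children of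
members of `U` comprise the `#U - 1` members other than `d` together with the edges leaving
`U`. Counting children node by node, `d` has at most two and every other member, being
unselected, at most one, so at most `2 + (#U - 1)` children in total and at most two edges
leave `U`.
-/

open Finset

namespace ContractedTree

variable {V : Type*} [Fintype V] [DecidableEq V] (parent : V → Option V)

def children (v : V) : Finset V := {u | parent u = some v}

/-- The children of the node obtained by contracting `U`. -/
def outChildren (U : Finset V) : Finset V := {u | u ∉ U ∧ ∃ v ∈ U, parent u = some v}

theorem coe_children (v : V) : (children parent v : Set V) = {u | parent u = some v} := by
  ext u; simp [children]

theorem pairwise_disjoint_children : Pairwise (Function.onFun Disjoint (children parent)) := by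
  intro v w hvw
  rw [Function.onFun, disjoint_left]
  intro u huv huw
  simp only [children, mem_filter, mem_univ, true_and] at huv huw
  exact hvw (Option.some.inj (huv.symm.trans huw))

theorem card_outChildren_add_card_erase_le {U : Finset V} {d : V}
    (hconn : ∀ u ∈ U, u ≠ d → ∃ p ∈ U, parent u = some p) :
    #(outChildren parent U) + #(U.erase d) ≤ ∑ v ∈ U, #(children parent v) := by
  have hdisj : Disjoint (outChildren parent U) (U.erase d) := by
    rw [disjoint_left]
    intro u hu hu'
    exact (mem_filter.mp hu).2.1 (mem_of_mem_erase hu')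
  rw [← card_union_of_disjoint hdisj,
    ← card_biUnion ((pairwise_disjoint_children parent).set_pairwise _)]
  refine card_le_card fun u hu => ?_
  simp only [mem_biUnion, children, mem_filter, mem_univ, true_and]
  rcases mem_union.mp hu with hu | hu
  · obtain ⟨-, v, hvU, hv⟩ := (mem_filter.mp hu).2
    exact ⟨v, hvU, hv⟩
  · obtain ⟨hud, huU⟩ := mem_erase.mp hu
    exact hconn u huU hud

theorem card_outChildren_le_two {U : Finset V} {d : V} (hd : d ∈ U)
    (hconn : ∀ u ∈ U, u ≠ d → ∃ p ∈ U, parent u = some p)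
    (hd_two : #(children parent d) ≤ 2)
    (hunary : ∀ u ∈ U, u ≠ d → #(children parent u) ≤ 1) :
    #(outChildren parent U) ≤ 2 := by
  have hsum : ∑ v ∈ U, #(children parent v) ≤ #(U.erase d) + 2 := by
    rw [← sum_erase_add _ _ hd]
    gcongr
    calc ∑ v ∈ U.erase d, #(children parent v) ≤ ∑ _v ∈ U.erase d, 1 :=
          sum_le_sum fun v hv => hunary v (mem_of_mem_erase hv) (ne_of_mem_erase hv)
      _ = #(U.erase d) := by simp
  have := card_outChildren_add_card_erase_le parent hconn
  omega

end ContractedTree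

open ContractedTree in
theorem contracted_tree_binary_general {V : Type*} [Fintype V]
    (parent : V → Option V) (root : V)
    (hroot : ∀ v : V, parent v = none ↔ v = root)
    (hbinary : ∀ v : V, {u : V | parent u = some v}.ncard ≤ 2)
    (S : Set V) (hrootS : root ∈ S)
    (htwo : ∀ v : V, {u : V | parent u = some v}.ncard = 2 → v ∈ S)
    (g : V → V)
    (hgS : ∀ v ∈ S, g v = v)
    (hgmerge : ∀ v : V, v ∉ S → ∀ p : V, parent v = some p → g v = g p) :
    ∀ d ∈ S, {u : V | g u ≠ d ∧ ∃ v : V, parent u = some v ∧ g v = d}.ncard ≤ 2 := by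
  classical
  intro d hd
  have hcard : ∀ v, {u : V | parent u = some v}.ncard = #(children parent v) := fun v => by
    rw [← coe_children, Set.ncard_coe_finset]
  have hunsel : ∀ u, g u = d → u ≠ d → u ∉ S := fun u hu hud huS => hud (hgS u huS ▸ hu)
  let U : Finset V := {v | g v = d}
  have hout : {u : V | g u ≠ d ∧ ∃ v : V, parent u = some v ∧ g v = d} =
      ↑(outChildren parent U) := by
    ext u; simp [outChildren, U, and_comm]
  rw [hout, Set.ncard_coe_finset]
  refine card_outChildren_le_two parent (d := d) (by simp [U, hgS d hd]) ?_
    (hcard d ▸ hbinary d) ?_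
  · intro u hu hud
    have huS := hunsel u (mem_filter.mp hu).2 hud
    obtain ⟨p, hp⟩ := Option.ne_none_iff_exists'.mp
      fun h => huS ((hroot u).mp h ▸ hrootS)
    exact ⟨p, by simpa [U, ← hgmerge u huS p hp] using hu, hp⟩
  · intro u hu hud
    have huS := hunsel u (mem_filter.mp hu).2 hud
    have hle := hcard u ▸ hbinary u
    have hne : #(children parent u) ≠ 2 := fun h => huS (htwo u (hcard u ▸ h))
    omega

/-- Consider a rooted binary component tree (every node has at most two children)
and a merging step: a set `S` of nodes is selected, containing the root and every
node with exactly two children; each unselected node is merged into its closest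
selected ancestor.  The merging is encoded by the map `g` sending each node to the
selected node of its merged group (`g v = v` for selected `v`, and `g v = g (parent v)`
for unselected `v`).  Then the resulting contracted tree is also binary: each merged
group `{v | g v = d}` has at most two children, i.e. at most two edges from the
group to nodes outside the group. -/
theorem contracted_tree_binary {V : Type*} [Fintype V]
    (parent : V → Option V) (root : V)
    (hroot : ∀ v : V, parent v = none ↔ v = root)
    (hacyc : WellFounded fun u v : V => parent v = some u)
    (hbinary : ∀ v : V, {u : V | parent u = some v}.ncard ≤ 2)
    (S : Set V) (hrootS : root ∈ S)
    (htwo : ∀ v : V, {u : V | parent u = some v}.ncard = 2 → v ∈ S)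
    (g : V → V)
    (hgS : ∀ v ∈ S, g v = v)
    (hgmerge : ∀ v : V, v ∉ S → ∀ p : V, parent v = some p → g v = g p) :
    ∀ d ∈ S, {u : V | g u ≠ d ∧ ∃ v : V, parent u = some v ∧ g v = d}.ncard ≤ 2 :=
  contracted_tree_binary_general parent root hroot hbinary S hrootS htwo g hgS hgmerge
end
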